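/- arXiv:2012.14032 — 3 statements merged into one kernel-verified Lean document; each statement's English description precedes it below -/
import Mathlib

section
/- Let L be an N×N real matrix satisfying L·1 = 0 (where 1 is the all-ones vector). Define the (N-1)×(N-1) matrix L̄ by L̄_{ij} = L_{ij} - L_{Nj} for 1 ≤ i,j ≤ N-1. Then every nonzero eigenvalue of L is an eigenvalue of L̄. -/
open Matrix

lemma spec_iff_aux {K : Type*} [Field K] {m : Type*} [Fintype m] [DecidableEq m]
    (M : Matrix m m K) (μ : K) :
    μ ∈ spectrum K M ↔ ∃ v : m → K, v ≠ 0 ∧ M.mulVec v = μ • v := by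
  rw [← AlgEquiv.spectrum_eq Matrix.toLinAlgEquiv',
    ← Module.End.hasEigenvalue_iff_mem_spectrum]
  constructor
  · intro h
    obtain ⟨v, hv⟩ := h.exists_hasEigenvector
    exact ⟨v, hv.2, by simpa [Matrix.toLinAlgEquiv'_apply] using hv.apply_eq_smul⟩
  · rintro ⟨v, hv0, hv⟩
    exact Module.End.hasEigenvalue_of_hasEigenvector
      ⟨Module.End.mem_eigenspace_iff.mpr
        (by simpa [Matrix.toLinAlgEquiv'_apply] using hv), hv0⟩

/-- Every nonzero (complex) eigenvalue of an `N×N` real matrix `L` with `L·1 = 0`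
is an eigenvalue of the reduced matrix `L̄` with `L̄ i j = L i j - L N j`. -/
theorem stmt_0 (n : ℕ) (L : Matrix (Fin (n + 1)) (Fin (n + 1)) ℝ)
    (hL : L.mulVec (fun _ => (1 : ℝ)) = 0)
    (Lbar : Matrix (Fin n) (Fin n) ℝ)
    (hLbar : ∀ i j : Fin n,
      Lbar i j = L i.castSucc j.castSucc - L (Fin.last n) j.castSucc)
    (μ : ℂ) (hμ : μ ≠ 0)
    (hspec : μ ∈ spectrum ℂ (L.map (Complex.ofReal ·))) :
    μ ∈ spectrum ℂ (Lbar.map (Complex.ofReal ·)) := by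
  classical
  set M : Matrix (Fin (n + 1)) (Fin (n + 1)) ℂ := L.map (Complex.ofReal ·) with hM
  rw [spec_iff_aux] at hspec ⊢
  obtain ⟨v, hv0, hv⟩ := hspec
  have hrow : ∀ i, ∑ j, M i j = 0 := by
    intro i
    have h1 : ∑ j, L i j = 0 := by
      simpa [Matrix.mulVec, dotProduct] using congrFun hL i
    simp [hM, Matrix.map_apply, ← Complex.ofReal_sum, h1]
  have hmv : ∀ i, ∑ j, M i j * v j = μ * v i := by
    intro i
    simpa [Matrix.mulVec, dotProduct] using congrFun hv i
  set c := v (Fin.last n) with hc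
  have hA : ∀ i, ∑ j : Fin n, M i j.castSucc * v j.castSucc
      = μ * v i - M i (Fin.last n) * c := by
    intro i
    have := hmv i
    rw [Fin.sum_univ_castSucc] at this
    linear_combination this
  have hB : ∀ i, ∑ j : Fin n, M i j.castSucc = - M i (Fin.last n) := by
    intro i
    have := hrow i
    rw [Fin.sum_univ_castSucc] at this
    linear_combination this
  refine ⟨fun i => v i.castSucc - c, ?_, ?_⟩
  · intro hw
    have hvc : ∀ j, v j = c := by
      intro j
      refine Fin.lastCases rfl (fun j => ?_) j
      have := congrFun hw j
      simpa [sub_eq_zero] using this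
    have hc0 : c ≠ 0 := by
      intro h
      exact hv0 (funext fun j => by rw [hvc j, h]; rfl)
    have hμc : μ * c = 0 := by
      have h := hmv (Fin.last n)
      rw [show ∑ j, M (Fin.last n) j * v j = (∑ j, M (Fin.last n) j) * c by
        rw [Finset.sum_mul]; exact Finset.sum_congr rfl fun j _ => by rw [hvc j]] at h
      rw [hrow, zero_mul] at h
      exact h.symm
    exact hμ ((mul_eq_zero.mp hμc).resolve_right hc0)
  · funext i
    have hentry : ∀ j : Fin n, (Lbar.map (Complex.ofReal ·)) i j
        = M i.castSucc j.castSucc - M (Fin.last n) j.castSucc := by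
      intro j
      simp [Matrix.map_apply, hLbar i j, hM]
    have expand : ∑ j : Fin n,
        (M i.castSucc j.castSucc - M (Fin.last n) j.castSucc) * (v j.castSucc - c)
        = (∑ j : Fin n, M i.castSucc j.castSucc * v j.castSucc)
          - (∑ j : Fin n, M (Fin.last n) j.castSucc * v j.castSucc)
          - (∑ j : Fin n, M i.castSucc j.castSucc) * c
          + (∑ j : Fin n, M (Fin.last n) j.castSucc) * c := by
      rw [Finset.sum_mul, Finset.sum_mul, ← Finset.sum_sub_distrib,
        ← Finset.sum_sub_distrib, ← Finset.sum_add_distrib]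
      exact Finset.sum_congr rfl fun j _ => by ring
    show ∑ j, (Lbar.map (Complex.ofReal ·)) i j * (v j.castSucc - c) = _
    calc ∑ j : Fin n, (Lbar.map (Complex.ofReal ·)) i j * (v j.castSucc - c)
        = ∑ j : Fin n,
          (M i.castSucc j.castSucc - M (Fin.last n) j.castSucc) * (v j.castSucc - c) :=
          Finset.sum_congr rfl fun j _ => by rw [hentry j]
      _ = μ * (v i.castSucc - c) := by
          rw [expand, hA, hA, hB, hB]; ring
      _ = (μ • fun i : Fin n => v i.castSucc - c) i := by simp
end

section
/- If a weighted directed graph on N nodes contains a directed spanning tree, then 0 is a simple eigenvalue of its Laplacian matrix L (i.e., the kernel of L is spanned by the all-ones vector). -/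
open Matrix

/-- If a weighted directed graph contains a directed spanning tree (i.e. some
root node has a directed path to every node), then `0` is a simple eigenvalue
of its Laplacian: the kernel of `L` is spanned by the all-ones vector. -/
theorem stmt_16 (N : ℕ) (a : Fin N → Fin N → ℝ)
    (ha : ∀ i j, 0 ≤ a i j) (hdiag : ∀ i, a i i = 0)
    (L : Matrix (Fin N) (Fin N) ℝ)
    (hLdef : ∀ i j, L i j = if i = j then ∑ k, a i k else -(a i j))
    -- a directed spanning tree exists: some root reaches every node, where
    -- there is an edge from `u` to `v` precisely when `a v u > 0`
    (htree : ∃ r : Fin N, ∀ i : Fin N,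
      Relation.ReflTransGen (fun u v : Fin N => 0 < a v u) r i) :
    ∀ x : Fin N → ℝ, L.mulVec x = 0 → ∃ c : ℝ, x = fun _ => c := by
  intro x hx
  obtain ⟨r, hr⟩ := htree
  -- row equation: ∑_j a v j (x v - x j) = 0
  have hrow : ∀ v, ∑ j, a v j * (x v - x j) = 0 := by
    intro v
    have h0 : L.mulVec x v = 0 := by rw [hx]; rfl
    rw [mulVec, dotProduct] at h0
    have heq : ∑ j, L v j * x j = ∑ j, a v j * (x v - x j) := by
      have h1 : ∀ j, L v j * x j = a v j * (x v - x j)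
          - (a v j * x v - if v = j then (∑ k, a v k) * x j else 0) := by
        intro j
        by_cases h : v = j
        · subst j
          simp [hLdef, hdiag]
        · simp [hLdef, h]
          ring
      rw [Finset.sum_congr rfl (fun j _ => h1 j), Finset.sum_sub_distrib,
        Finset.sum_sub_distrib,
        Finset.sum_ite_eq Finset.univ v (fun j => (∑ k, a v k) * x j)]
      simp [← Finset.sum_mul]
    rw [heq] at h0
    exact h0
  -- propagation of minimum backwards along edges
  have hmin : ∀ i, Relation.ReflTransGen (fun u v : Fin N => 0 < a v u) r i →
      (∀ j, x i ≤ x j) → x r = x i := by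
    intro i h
    induction h with
    | refl => intro _; rfl
    | tail hrb hbc ih =>
      rename_i b c
      intro hc
      have hb : x b = x c := by
        have hnp : ∀ j ∈ Finset.univ, a c j * (x c - x j) ≤ 0 := by
          intro j _
          exact mul_nonpos_of_nonneg_of_nonpos (ha c j) (by linarith [hc j])
        have hz := (Finset.sum_eq_zero_iff_of_nonpos hnp).mp (hrow c) b
          (Finset.mem_univ b)
        have : x c - x b = 0 := by
          rcases mul_eq_zero.mp hz with h | h
          · exact absurd h (ne_of_gt hbc)
          · exact h
        linarith
      have := ih (fun j => hb ▸ hc j)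
      rw [this, hb]
  -- propagation of maximum backwards along edges
  have hmax : ∀ i, Relation.ReflTransGen (fun u v : Fin N => 0 < a v u) r i →
      (∀ j, x j ≤ x i) → x r = x i := by
    intro i h
    induction h with
    | refl => intro _; rfl
    | tail hrb hbc ih =>
      rename_i b c
      intro hc
      have hb : x b = x c := by
        have hnn : ∀ j ∈ Finset.univ, 0 ≤ a c j * (x c - x j) := by
          intro j _
          exact mul_nonneg (ha c j) (by linarith [hc j])
        have hz := (Finset.sum_eq_zero_iff_of_nonneg hnn).mp (hrow c) b
          (Finset.mem_univ b)
        have : x c - x b = 0 := by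
          rcases mul_eq_zero.mp hz with h | h
          · exact absurd h (ne_of_gt hbc)
          · exact h
        linarith
      have := ih (fun j => hb ▸ hc j)
      rw [this, hb]
  obtain ⟨i0, -, hi0⟩ := Finset.exists_min_image Finset.univ x ⟨r, Finset.mem_univ r⟩
  obtain ⟨i1, -, hi1⟩ := Finset.exists_max_image Finset.univ x ⟨r, Finset.mem_univ r⟩
  have h0 : x r = x i0 := hmin i0 (hr i0) (fun j => hi0 j (Finset.mem_univ j))
  have h1 : x r = x i1 := hmax i1 (hr i1) (fun j => hi1 j (Finset.mem_univ j))
  refine ⟨x r, funext fun i => ?_⟩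
  have := hi0 i (Finset.mem_univ i)
  have := hi1 i (Finset.mem_univ i)
  show x i = x r
  linarith
end

section
/- Let L be an N×N Laplacian matrix (L·1 = 0, nonnegative off-diagonal negated weights) and D = diag(ι_1,...,ι_N) with ι_i ∈ {0,1} not all zero. If every node of the graph is reachable by a directed path from some node i with ι_i = 1, then every eigenvalue of L̃ = L + D has strictly positive real part; in particular L̃ is invertible. -/
/-!
Let `v ≠ 0` satisfy `(L + D) v = z v` with `Re z ≤ 0`, and look at the nodes where `‖v i‖` is
maximal. At such a node `(d_i + ι_i - z) v_i = ∑ₖ a_ik v_k`, where `d_i = ∑ₖ a_ik`, and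
`‖d_i + ι_i - z‖ ≥ d_i + ι_i`; comparing with `‖∑ₖ a_ik v_k‖ ≤ d_i ‖v‖` forces `ι_i = 0` and
`‖v k‖ = ‖v‖` at every `k` with `a_ik > 0`. So the maximal nodes are closed under going back along
edges and therefore contain a root, where `ι = 1`. Invertibility is the case `z = 0` over `ℝ`.
-/

open Matrix Finset

theorem Relation.ReflTransGen.mem_of_mem_of_closed {α : Type*} {r : α → α → Prop} {S : Set α}
    (hS : ∀ a b, r a b → b ∈ S → a ∈ S) {a b : α} (h : Relation.ReflTransGen r a b)
    (hb : b ∈ S) : a ∈ S := by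
  induction h with
  | refl => exact hb
  | tail _ hbc ih => exact ih (hS _ _ hbc hb)

theorem Matrix.exists_mulVec_eq_smul_of_mem_spectrum {K n : Type*} [Field K] [Fintype n]
    [DecidableEq n] {A : Matrix n n K} {μ : K} (hμ : μ ∈ spectrum K A) :
    ∃ v ≠ 0, A *ᵥ v = μ • v := by
  rw [← spectrum_toLin', ← Module.End.hasEigenvalue_iff_mem_spectrum] at hμ
  obtain ⟨v, hv⟩ := hμ.exists_hasEigenvector
  exact ⟨v, hv.2, by simpa using hv.apply_eq_smul⟩

theorem exists_norm_apply_eq_pi_norm {ι E : Type*} [Fintype ι] [Nonempty ι]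
    [SeminormedAddCommGroup E] (f : ι → E) : ∃ i, ‖f i‖ = ‖f‖ := by
  obtain ⟨i, -, hi⟩ := exists_mem_eq_sup univ univ_nonempty fun b => ‖f b‖₊
  exact ⟨i, by rw [Pi.norm_def, hi, coe_nnnorm]⟩

namespace Matrix

variable {n : Type*} [Fintype n] [DecidableEq n]

-- `L + D` of the paper when the weights `a` have zero diagonal.
def expandedLaplacian (a : n → n → ℝ) (ι : n → ℝ) : Matrix n n ℝ :=
  diagonal (fun i => ∑ k, a i k + ι i) - of a

variable {𝕜 : Type*} [RCLike 𝕜] {a : n → n → ℝ} {ι : n → ℝ}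

theorem expandedLaplacian_map_mulVec_apply (v : n → 𝕜) (i : n) :
    ((expandedLaplacian a ι).map ((↑) : ℝ → 𝕜) *ᵥ v) i
      = ((∑ k, a i k + ι i : ℝ) : 𝕜) * v i - ∑ k, (a i k : 𝕜) * v k := by
  rw [expandedLaplacian, Matrix.map_sub _ RCLike.ofReal_sub, diagonal_map (map_zero _),
    sub_mulVec, Pi.sub_apply, mulVec_diagonal]
  rfl

section Eigenvector

variable {z : 𝕜} {v : n → 𝕜}

theorem add_mul_norm_le_of_norm_apply_eq (ha : ∀ i j, 0 ≤ a i j) (hz : RCLike.re z ≤ 0)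
    (hv : (expandedLaplacian a ι).map ((↑) : ℝ → 𝕜) *ᵥ v = z • v) {i : n} (hi : ‖v i‖ = ‖v‖) :
    (∑ k, a i k + ι i) * ‖v‖ ≤ ∑ k, a i k * ‖v k‖ := by
  have hvi : ((∑ k, a i k + ι i : ℝ) - z) * v i = ∑ k, (a i k : 𝕜) * v k := by
    have := congrFun hv i
    rw [expandedLaplacian_map_mulVec_apply, Pi.smul_apply, smul_eq_mul] at this
    linear_combination this
  have hre : ∑ k, a i k + ι i ≤ ‖((∑ k, a i k + ι i : ℝ) : 𝕜) - z‖ := by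
    refine le_trans ?_ (RCLike.re_le_norm _)
    simpa using hz
  calc (∑ k, a i k + ι i) * ‖v‖ ≤ ‖((∑ k, a i k + ι i : ℝ) : 𝕜) - z‖ * ‖v i‖ := by
        rw [hi]; exact mul_le_mul_of_nonneg_right hre (norm_nonneg _)
    _ = ‖∑ k, (a i k : 𝕜) * v k‖ := by rw [← norm_mul, hvi]
    _ ≤ ∑ k, a i k * ‖v k‖ := by
        refine (norm_sum_le _ _).trans_eq (sum_congr rfl fun k _ => ?_)
        rw [norm_mul, RCLike.norm_ofReal, abs_of_nonneg (ha i k)]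

theorem mul_norm_eq_zero_and_mul_sub_norm_eq_zero (ha : ∀ i j, 0 ≤ a i j)
    (hι : ∀ i, 0 ≤ ι i) (hz : RCLike.re z ≤ 0)
    (hv : (expandedLaplacian a ι).map ((↑) : ℝ → 𝕜) *ᵥ v = z • v) {i : n} (hi : ‖v i‖ = ‖v‖) :
    ι i * ‖v‖ = 0 ∧ ∀ k, a i k * (‖v‖ - ‖v k‖) = 0 := by
  have hle := add_mul_norm_le_of_norm_apply_eq ha hz hv hi
  have hsub : ∀ k ∈ univ, 0 ≤ a i k * (‖v‖ - ‖v k‖) := fun k _ =>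
    mul_nonneg (ha i k) (sub_nonneg.mpr (norm_le_pi_norm v k))
  have hsum : ι i * ‖v‖ + ∑ k, a i k * (‖v‖ - ‖v k‖) = 0 := by
    refine le_antisymm ?_ (add_nonneg (mul_nonneg (hι i) (norm_nonneg v)) (sum_nonneg hsub))
    simp only [mul_sub, sum_sub_distrib, ← sum_mul] at hle ⊢
    linarith
  obtain ⟨hιv, hsum0⟩ :=
    (add_eq_zero_iff_of_nonneg (mul_nonneg (hι i) (norm_nonneg v)) (sum_nonneg hsub)).mp hsum
  exact ⟨hιv, fun k => (sum_eq_zero_iff_of_nonneg hsub).mp hsum0 k (mem_univ k)⟩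

theorem eq_zero_of_norm_apply_eq (ha : ∀ i j, 0 ≤ a i j) (hι : ∀ i, 0 ≤ ι i)
    (hz : RCLike.re z ≤ 0) (hv : (expandedLaplacian a ι).map ((↑) : ℝ → 𝕜) *ᵥ v = z • v)
    (hv0 : v ≠ 0) {i : n} (hi : ‖v i‖ = ‖v‖) : ι i = 0 :=
  (mul_eq_zero.mp (mul_norm_eq_zero_and_mul_sub_norm_eq_zero ha hι hz hv hi).1).resolve_right
    (norm_ne_zero_iff.mpr hv0)

theorem norm_apply_eq_of_norm_apply_eq (ha : ∀ i j, 0 ≤ a i j) (hι : ∀ i, 0 ≤ ι i)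
    (hz : RCLike.re z ≤ 0) (hv : (expandedLaplacian a ι).map ((↑) : ℝ → 𝕜) *ᵥ v = z • v)
    {i k : n} (hi : ‖v i‖ = ‖v‖) (hk : 0 < a i k) : ‖v k‖ = ‖v‖ :=
  (sub_eq_zero.mp ((mul_eq_zero.mp ((mul_norm_eq_zero_and_mul_sub_norm_eq_zero ha hι hz hv hi).2
    k)).resolve_left hk.ne')).symm

theorem eq_zero_of_mulVec_eq_smul (ha : ∀ i j, 0 ≤ a i j) (hι : ∀ i, 0 ≤ ι i)
    (hroot : ∀ i, ∃ r, 0 < ι r ∧ Relation.ReflTransGen (fun u w => 0 < a w u) r i)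
    (hz : RCLike.re z ≤ 0) (hv : (expandedLaplacian a ι).map ((↑) : ℝ → 𝕜) *ᵥ v = z • v) :
    v = 0 := by
  by_contra hv0
  obtain ⟨j, -⟩ := Function.ne_iff.mp hv0
  have : Nonempty n := ⟨j⟩
  obtain ⟨i, hi⟩ := exists_norm_apply_eq_pi_norm v
  obtain ⟨r, hr, hri⟩ := hroot i
  have hrmax : ‖v r‖ = ‖v‖ := hri.mem_of_mem_of_closed (S := {k | ‖v k‖ = ‖v‖})
    (fun _ _ huw hw => norm_apply_eq_of_norm_apply_eq ha hι hz hv hw huw) hi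
  exact hr.ne' (eq_zero_of_norm_apply_eq ha hι hz hv hv0 hrmax)

end Eigenvector

theorem re_pos_of_mem_spectrum_expandedLaplacian (ha : ∀ i j, 0 ≤ a i j) (hι : ∀ i, 0 ≤ ι i)
    (hroot : ∀ i, ∃ r, 0 < ι r ∧ Relation.ReflTransGen (fun u w => 0 < a w u) r i) {z : 𝕜}
    (hz : z ∈ spectrum 𝕜 ((expandedLaplacian a ι).map ((↑) : ℝ → 𝕜))) : 0 < RCLike.re z := by
  obtain ⟨v, hv0, hv⟩ := exists_mulVec_eq_smul_of_mem_spectrum hz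
  by_contra hre
  exact hv0 (eq_zero_of_mulVec_eq_smul ha hι hroot (not_lt.mp hre) hv)

theorem isUnit_expandedLaplacian (ha : ∀ i j, 0 ≤ a i j) (hι : ∀ i, 0 ≤ ι i)
    (hroot : ∀ i, ∃ r, 0 < ι r ∧ Relation.ReflTransGen (fun u w => 0 < a w u) r i) :
    IsUnit (expandedLaplacian a ι) := by
  rw [← spectrum.zero_notMem_iff ℝ]
  intro h0
  simpa using re_pos_of_mem_spectrum_expandedLaplacian (𝕜 := ℝ) ha hι hroot (z := 0)
    (by simpa using h0)

end Matrix

theorem stmt_19_general (N : ℕ) (a : Fin N → Fin N → ℝ)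
    (ha : ∀ i j, 0 ≤ a i j) (hdiag : ∀ i, a i i = 0)
    (L : Matrix (Fin N) (Fin N) ℝ)
    (hLdef : ∀ i j, L i j = if i = j then ∑ k, a i k else -(a i j))
    (ι : Fin N → ℝ) (hι : ∀ i, ι i = 0 ∨ ι i = 1)
    -- every node is reachable from some root `r` with `ι r = 1`, where there
    -- is an edge from `u` to `v` precisely when `a v u > 0`
    (hreach : ∀ v : Fin N, ∃ r : Fin N, ι r = 1 ∧
      Relation.ReflTransGen (fun u v' : Fin N => 0 < a v' u) r v) :
    (∀ z ∈ spectrum ℂ ((L + Matrix.diagonal ι).map (Complex.ofReal ·)), 0 < z.re) ∧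
      IsUnit (L + Matrix.diagonal ι) := by
  have hL : L + diagonal ι = expandedLaplacian a ι := by
    ext i j
    by_cases hij : i = j
    · subst hij; simp [expandedLaplacian, hLdef, hdiag]
    · simp [expandedLaplacian, hLdef, hij]
  have hι0 : ∀ i, 0 ≤ ι i := fun i => by rcases hι i with h | h <;> simp [h]
  have hroot : ∀ i, ∃ r, 0 < ι r ∧ Relation.ReflTransGen (fun u w => 0 < a w u) r i :=
    fun i => (hreach i).imp fun r ⟨hr, hri⟩ => ⟨hr ▸ one_pos, hri⟩
  rw [hL]
  exact ⟨fun z hz => re_pos_of_mem_spectrum_expandedLaplacian ha hι0 hroot hz,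
    isUnit_expandedLaplacian ha hι0 hroot⟩

/-- If `L` is the Laplacian of a weighted directed graph and
`D = diag(ι₁,…,ι_N)` with `ι_i ∈ {0,1}` not all zero, and every node is
reachable by a directed path from some node `i` with `ι_i = 1`, then every
eigenvalue of `L̃ = L + D` has strictly positive real part; in particular `L̃`
is invertible. -/
theorem stmt_19 (N : ℕ) (a : Fin N → Fin N → ℝ)
    (ha : ∀ i j, 0 ≤ a i j) (hdiag : ∀ i, a i i = 0)
    (L : Matrix (Fin N) (Fin N) ℝ)
    (hLdef : ∀ i j, L i j = if i = j then ∑ k, a i k else -(a i j))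
    (ι : Fin N → ℝ) (hι : ∀ i, ι i = 0 ∨ ι i = 1) (hι1 : ∃ i, ι i = 1)
    -- every node is reachable from some root `r` with `ι r = 1`, where there
    -- is an edge from `u` to `v` precisely when `a v u > 0`
    (hreach : ∀ v : Fin N, ∃ r : Fin N, ι r = 1 ∧
      Relation.ReflTransGen (fun u v' : Fin N => 0 < a v' u) r v) :
    (∀ z ∈ spectrum ℂ ((L + Matrix.diagonal ι).map (Complex.ofReal ·)), 0 < z.re) ∧
      IsUnit (L + Matrix.diagonal ι) :=
  stmt_19_general N a ha hdiag L hLdef ι hι hreach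
end
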